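/- arXiv:2004.05022 — 2 statements merged into one kernel-verified Lean document; each statement's English description precedes it below -/
import Mathlib

section
/- Let s ≥ 0 and t ≥ 2, and let G be a (K_t, sP1+P5)-free graph. Let X and Y be disjoint vertex sets such that some vertex d is adjacent to every vertex of X and to no vertex of Y. Then every induced matching in G between X and Y has size less than R(t−1, R(t−1, s+2)), where R denotes the graph Ramsey number. -/
/-- The disjoint union of `s` isolated vertices and a path on 5 vertices. -/
def sP1P5 (s : ℕ) : SimpleGraph (Fin s ⊕ Fin 5) where
  Adj x y := match x, y with
    | Sum.inr u, Sum.inr v => (SimpleGraph.pathGraph 5).Adj u v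
    | _, _ => False
  symm := ⟨by rintro (u | u) (v | v) h <;> simp_all; exact h.symm⟩
  loopless := ⟨by rintro (u | u) h <;> simp_all⟩

/-- An induced matching of size `m` between `A` and `B`, given by vertex families `a`, `b`. -/
def IndMatch {V : Type} (G : SimpleGraph V) (A B : Set V) {m : ℕ}
    (a b : Fin m → V) : Prop :=
  Function.Injective a ∧ Function.Injective b ∧
  (∀ i, a i ∈ A) ∧ (∀ i, b i ∈ B) ∧
  (∀ i j, G.Adj (a i) (b j) ↔ i = j) ∧
  (∀ i j, i ≠ j → ¬ G.Adj (a i) (a j) ∧ ¬ G.Adj (b i) (b j))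

/-!
With `s + 2` matching edges `aᵢbᵢ`, the path `b₀ a₀ d a₁ b₁` together with the isolated vertices
`b₂, …, b_{s+1}` would induce `sP1+P5`, so `m ≤ s + 1`. On the other hand `q ≤ R(p, q)` for `p ≥ 2`,
as the edgeless graph on `R(p, q)` vertices shows, so `s + 2 ≤ R(t-1, R(t-1, s+2))` once `t ≥ 3`.
If `t = 2`, the graph is edgeless and there is no matching edge at all.
-/

open SimpleGraph

def IsRamseyFunction (R : ℕ → ℕ → ℕ) : Prop :=
  ∀ (p q : ℕ) (W : Type) (_ : Fintype W) (H : SimpleGraph W),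
    R p q ≤ Fintype.card W →
      (∃ S : Finset W, H.IsNClique p S) ∨
      (∃ S : Finset W, S.card = q ∧ ∀ u ∈ S, ∀ v ∈ S, u ≠ v → ¬ H.Adj u v)

namespace IsRamseyFunction

variable {R : ℕ → ℕ → ℕ}

theorem right_le (hR : IsRamseyFunction R) {p : ℕ} (q : ℕ) (hp : 2 ≤ p) : q ≤ R p q := by
  rcases hR p q (Fin (R p q)) inferInstance ⊥ (by simp) with ⟨S, hS⟩ | ⟨S, hS, -⟩
  · exact absurd hS (cliqueFree_bot hp S)
  · simpa [hS] using S.card_le_univ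

theorem pos (hR : IsRamseyFunction R) {p q : ℕ} (hp : 1 ≤ p) (hq : 1 ≤ q) : 0 < R p q := by
  by_contra! h
  rcases hR p q (Fin 0) inferInstance ⊥ (by simpa using h) with ⟨S, hS⟩ | ⟨S, hS, -⟩
  · have := hS.card_eq; simp [Finset.eq_empty_of_isEmpty S] at this; omega
  · simp [Finset.eq_empty_of_isEmpty S] at hS; omega

end IsRamseyFunction

theorem injective_of_adj_iff {V W : Type*} {G : SimpleGraph V} {H : SimpleGraph W} {f : W → V}
    (hH : ∀ u v, (∀ w, H.Adj u w ↔ H.Adj v w) → u = v)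
    (hf : ∀ u v, G.Adj (f u) (f v) ↔ H.Adj u v) : Function.Injective f :=
  fun u v huv => hH u v fun w => by rw [← hf, ← hf, huv]

theorem pathGraph_five_eq_of_adj_iff (u v : Fin 5)
    (h : ∀ w, (pathGraph 5).Adj u w ↔ (pathGraph 5).Adj v w) : u = v := by
  revert u v; simp only [pathGraph_adj]; decide

theorem pathGraph_five_exists_adj (u : Fin 5) : ∃ w, (pathGraph 5).Adj u w := by
  revert u; simp only [pathGraph_adj]; decide

theorem nonempty_sP1P5_embedding {V : Type} {G : SimpleGraph V} {s : ℕ}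
    (p : Fin 5 → V) (c : Fin s → V)
    (hp : ∀ u v, G.Adj (p u) (p v) ↔ (pathGraph 5).Adj u v)
    (hc : Function.Injective c) (hcc : ∀ i j, ¬ G.Adj (c i) (c j))
    (hcp : ∀ i u, ¬ G.Adj (c i) (p u)) : Nonempty (sP1P5 s ↪g G) := by
  have hcp_ne (i : Fin s) (u : Fin 5) : c i ≠ p u := fun h => by
    obtain ⟨w, hw⟩ := pathGraph_five_exists_adj u
    exact hcp i w (h ▸ (hp u w).2 hw)
  have hinj : Function.Injective (Sum.elim c p) := by
    rintro (i | u) (j | v) h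
    · exact congrArg Sum.inl (hc h)
    · exact absurd h (hcp_ne i v)
    · exact absurd h.symm (hcp_ne j u)
    · exact congrArg Sum.inr (injective_of_adj_iff pathGraph_five_eq_of_adj_iff hp h)
  have hadj (x y) : G.Adj (Sum.elim c p x) (Sum.elim c p y) ↔ (sP1P5 s).Adj x y := by
    rcases x with i | u <;> rcases y with j | v
    · simpa [sP1P5] using hcc i j
    · simpa [sP1P5] using hcp i v
    · simpa [sP1P5, G.adj_comm] using hcp j u
    · simpa [sP1P5] using hp u v
  exact ⟨⟨⟨Sum.elim c p, hinj⟩, hadj _ _⟩⟩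

namespace IndMatch

variable {V : Type} {G : SimpleGraph V} {A B : Set V} {m : ℕ} {a b : Fin m → V}

theorem comp {k : ℕ} (hM : IndMatch G A B a b) {e : Fin k → Fin m} (he : Function.Injective e) :
    IndMatch G A B (a ∘ e) (b ∘ e) := by
  obtain ⟨ha, hb, hA, hB, hab, hind⟩ := hM
  exact ⟨ha.comp he, hb.comp he, fun i => hA _, fun i => hB _,
    fun i j => (hab _ _).trans he.eq_iff, fun i j hij => hind _ _ (he.ne hij)⟩

theorem adj_iff (hM : IndMatch G A B a b) (i j : Fin m) : G.Adj (a i) (b j) ↔ i = j :=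
  hM.2.2.2.2.1 i j

theorem adj_iff' (hM : IndMatch G A B a b) (i j : Fin m) : G.Adj (b j) (a i) ↔ i = j :=
  G.adj_comm _ _ |>.trans (hM.adj_iff i j)

theorem not_adj_left (hM : IndMatch G A B a b) (i j : Fin m) : ¬ G.Adj (a i) (a j) := by
  obtain rfl | hij := eq_or_ne i j
  · exact G.irrefl
  · exact (hM.2.2.2.2.2 i j hij).1

theorem not_adj_right (hM : IndMatch G A B a b) (i j : Fin m) : ¬ G.Adj (b i) (b j) := by
  obtain rfl | hij := eq_or_ne i j
  · exact G.irrefl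
  · exact (hM.2.2.2.2.2 i j hij).2

theorem nonempty_sP1P5_embedding {s : ℕ} {a b : Fin (s + 2) → V} (hM : IndMatch G A B a b)
    {d : V} (hdA : ∀ x ∈ A, G.Adj d x) (hdB : ∀ y ∈ B, ¬ G.Adj d y) :
    Nonempty (sP1P5 s ↪g G) := by
  have hda (i) : G.Adj d (a i) := hdA _ (hM.2.2.1 i)
  have had (i) : G.Adj (a i) d := (hda i).symm
  have hdb (i) : ¬ G.Adj d (b i) := hdB _ (hM.2.2.2.1 i)
  have hbd (i) : ¬ G.Adj (b i) d := fun h => hdb i h.symm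
  have hab := hM.adj_iff
  have hba := hM.adj_iff'
  have haa := hM.not_adj_left
  have hbb := hM.not_adj_right
  refine _root_.nonempty_sP1P5_embedding ![b 0, a 0, d, a 1, b 1] (fun i => b (i.addNat 2))
    (fun u v => ?_) (fun i j h => ?_) (fun i j => hbb _ _) (fun i u => ?_)
  · fin_cases u <;> fin_cases v <;> simp [hab, hba, haa, hbb, hda, had, hdb, hbd, pathGraph_adj]
  · exact (Fin.addNat_inj 2).1 (hM.2.1 h)
  · have h0 : i.addNat 2 ≠ 0 := by simp [Fin.ext_iff]
    have h1 : i.addNat 2 ≠ 1 := by simp [Fin.ext_iff]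
    fin_cases u <;> simp [hba, hbb, hbd, h0.symm, h1.symm]

theorem le_of_sP1P5_free {s : ℕ} (hM : IndMatch G A B a b) (hfree : ¬ Nonempty (sP1P5 s ↪g G))
    {d : V} (hdA : ∀ x ∈ A, G.Adj d x) (hdB : ∀ y ∈ B, ¬ G.Adj d y) : m ≤ s + 1 := by
  by_contra! h
  exact hfree ((hM.comp (Fin.castLE_injective h)).nonempty_sP1P5_embedding hdA hdB)

end IndMatch

theorem stmt_13_general {V : Type} (G : SimpleGraph V) (s t : ℕ) (ht : 2 ≤ t)
    (R : ℕ → ℕ → ℕ)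
    (hR : ∀ (p q : ℕ) (W : Type) (_ : Fintype W) (H : SimpleGraph W),
      R p q ≤ Fintype.card W →
        (∃ S : Finset W, H.IsNClique p S) ∨
        (∃ S : Finset W, S.card = q ∧ ∀ u ∈ S, ∀ v ∈ S, u ≠ v → ¬ H.Adj u v))
    (hKt : G.CliqueFree t) (hfree : ¬ Nonempty (sP1P5 s ↪g G))
    (X Y : Set V) (d : V)
    (hdX : ∀ x ∈ X, G.Adj d x) (hdY : ∀ y ∈ Y, ¬ G.Adj d y)
    (m : ℕ) (a b : Fin m → V) (hM : IndMatch G X Y a b) :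
    m < R (t - 1) (R (t - 1) (s + 2)) := by
  have hR : IsRamseyFunction R := hR
  obtain rfl | hm := Nat.eq_zero_or_pos m
  · exact hR.pos (by omega) (hR.pos (by omega) (by omega))
  have ht3 : 3 ≤ t := by
    by_contra! ht2
    have hbot : G = ⊥ := cliqueFree_two.1 (by rwa [show t = 2 by omega] at hKt)
    exact (hbot ▸ (hM.adj_iff ⟨0, hm⟩ ⟨0, hm⟩).2 rfl : (⊥ : SimpleGraph V).Adj _ _)
  calc m < s + 2 := Nat.lt_succ_of_le (hM.le_of_sP1P5_free hfree hdX hdY)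
    _ ≤ R (t - 1) (s + 2) := hR.right_le _ (by omega)
    _ ≤ R (t - 1) (R (t - 1) (s + 2)) := hR.right_le _ (by omega)

theorem stmt_13 {V : Type} (G : SimpleGraph V) (s t : ℕ) (ht : 2 ≤ t)
    (R : ℕ → ℕ → ℕ)
    (hR : ∀ (p q : ℕ) (W : Type) (_ : Fintype W) (H : SimpleGraph W),
      R p q ≤ Fintype.card W →
        (∃ S : Finset W, H.IsNClique p S) ∨
        (∃ S : Finset W, S.card = q ∧ ∀ u ∈ S, ∀ v ∈ S, u ≠ v → ¬ H.Adj u v))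
    (hKt : G.CliqueFree t) (hfree : ¬ Nonempty (sP1P5 s ↪g G))
    (X Y : Set V) (hXY : Disjoint X Y) (d : V)
    (hdX : ∀ x ∈ X, G.Adj d x) (hdY : ∀ y ∈ Y, ¬ G.Adj d y)
    (m : ℕ) (a b : Fin m → V) (hM : IndMatch G X Y a b) :
    m < R (t - 1) (R (t - 1) (s + 2)) :=
  stmt_13_general G s t ht R hR hKt hfree X Y d hdX hdY m a b hM
end

section
/- Every connected (sP1+P5)-free graph G (s ≥ 1, t ≥ 1 arbitrary) has a dominating set of size at most max{3, ω(G), s+4}, where ω(G) is the clique number of G. -/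
/-
If `G` contains an induced `P₅`, add to it a maximal independent set `I` of the vertices that it
does not dominate. The result dominates `G`, and `|I| < s` because `I` together with the `P₅` would
otherwise be an induced `sP₁ + P₅`.

If `G` is `P₅`-free, take a minimum connected dominating set `D`. A vertex of `D` farthest from some
other one is not a cut vertex of `G[D]`, so by minimality it has a private neighbour outside `D`;
appended to a shortest path this would give an induced `P₅` unless `G[D]` has diameter at most 2.
If `D` is not a clique, two such farthest vertices `a`, `b` at distance 2, a common neighbour `m`
and their private neighbours `pa`, `pb` form a 5-cycle `pa a m b pb`, and `P₅`-freeness forces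
every vertex to be dominated by it.
-/

namespace SimpleGraph

variable {V W : Type*} {G : SimpleGraph V}

theorem injective_of_forall_adj_iff {H : SimpleGraph W} {f : W → V}
    (hf : ∀ i j, G.Adj (f i) (f j) ↔ H.Adj i j)
    (htwin : ∀ i j, (∀ k, H.Adj i k ↔ H.Adj j k) → i = j) : f.Injective :=
  fun i j hij ↦ htwin i j fun k ↦ by rw [← hf, ← hf, hij]

theorem pathGraph_five_isIndContained {a b c d e : V} (hab : G.Adj a b) (hbc : G.Adj b c)
    (hcd : G.Adj c d) (hde : G.Adj d e) (hac : ¬G.Adj a c) (had : ¬G.Adj a d)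
    (hae : ¬G.Adj a e) (hbd : ¬G.Adj b d) (hbe : ¬G.Adj b e) (hce : ¬G.Adj c e) :
    pathGraph 5 ⊴ G := by
  let f : Fin 5 → V := ![a, b, c, d, e]
  have hf : ∀ i j, G.Adj (f i) (f j) ↔ (pathGraph 5).Adj i j := by
    intro i j
    fin_cases i <;> fin_cases j <;> simp [f, pathGraph_adj, G.adj_comm, *]
  have htwin : ∀ i j : Fin 5, (∀ k, (pathGraph 5).Adj i k ↔ (pathGraph 5).Adj j k) → i = j := by
    simp only [pathGraph_adj]
    decide
  exact ⟨⟨⟨f, injective_of_forall_adj_iff hf htwin⟩, hf _ _⟩⟩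

theorem sP1P5_isIndContained {s : ℕ} (f : pathGraph 5 ↪g G) (g : Fin s ↪ V)
    (hg : ∀ i j, ¬G.Adj (g i) (g j)) (hgf : ∀ i j, g i ≠ f j ∧ ¬G.Adj (g i) (f j)) :
    sP1P5 s ⊴ G := by
  refine ⟨⟨⟨Sum.elim g f, g.injective.sumElim f.injective fun i j ↦ (hgf i j).1⟩, ?_⟩⟩
  rintro (i | i) (j | j) <;> simp [sP1P5, hg, hgf, fun i j ↦ mt G.adj_symm (hgf j i).2]

def IsDominating (G : SimpleGraph V) (D : Finset V) : Prop :=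
  ∀ v, v ∈ D ∨ ∃ u ∈ D, G.Adj u v

theorem exists_isIndepSet_subset_forall_mem_or_adj (R : Finset V) :
    ∃ I ⊆ R, G.IsIndepSet (I : Set V) ∧ ∀ r ∈ R, r ∈ I ∨ ∃ u ∈ I, G.Adj u r := by
  classical
  obtain ⟨I, hI, hmax⟩ := (R.powerset.filter fun I : Finset V ↦ G.IsIndepSet (I : Set V))
    |>.exists_max_image Finset.card ⟨∅, by simp⟩
  rw [Finset.mem_filter, Finset.mem_powerset] at hI
  refine ⟨I, hI.1, hI.2, fun r hr ↦ ?_⟩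
  by_contra! hr'
  have hins : insert r I ∈ R.powerset.filter fun I : Finset V ↦ G.IsIndepSet (I : Set V) := by
    rw [Finset.mem_filter, Finset.mem_powerset, Finset.coe_insert, isIndepSet_iff,
      Set.pairwise_insert]
    exact ⟨Finset.insert_subset hr hI.1, hI.2, fun u hu _ ↦ ⟨hr'.2 u hu ∘ G.adj_symm, hr'.2 u hu⟩⟩
  have := hmax _ hins
  rw [Finset.card_insert_of_notMem hr'.1] at this
  omega

theorem exists_isDominating_card_le_of_not_sP1P5_isIndContained [Fintype V]
    {s : ℕ} (hfree : ¬sP1P5 s ⊴ G) (f : pathGraph 5 ↪g G) :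
    ∃ D, G.IsDominating D ∧ D.card ≤ s + 4 := by
  classical
  set P := Finset.univ.image f
  obtain ⟨I, hIR, hIind, hIdom⟩ := G.exists_isIndepSet_subset_forall_mem_or_adj
    (Finset.univ.filter fun v ↦ v ∉ P ∧ ∀ u ∈ P, ¬G.Adj u v)
  have hIs : I.card < s := by
    by_contra! hsI
    let g : Fin s ↪ V := (Fin.castLEEmb hsI).trans (I.equivFin.symm.toEmbedding.trans
      (Function.Embedding.subtype _))
    have hgI (i : Fin s) : g i ∈ I := (I.equivFin.symm _).2
    have hgP (i : Fin s) := (Finset.mem_filter.mp (hIR (hgI i))).2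
    refine hfree (sP1P5_isIndContained f g (fun i j h ↦ hIind (hgI i) (hgI j) h.ne h)
      fun i j ↦ ⟨?_, ?_⟩)
    · exact fun h ↦ (hgP i).1 (h ▸ Finset.mem_image_of_mem f (Finset.mem_univ j))
    · exact fun h ↦ (hgP i).2 _ (Finset.mem_image_of_mem f (Finset.mem_univ j)) h.symm
  refine ⟨P ∪ I, fun v ↦ ?_, ?_⟩
  · by_cases hv : v ∉ P ∧ ∀ u ∈ P, ¬G.Adj u v
    · obtain hvI | ⟨u, hu, huv⟩ := hIdom v (by simpa using hv)
      · exact .inl (Finset.mem_union_right _ hvI)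
      · exact .inr ⟨u, Finset.mem_union_right _ hu, huv⟩
    · rw [not_and_or, not_not, not_forall₂] at hv
      obtain hvP | ⟨u, hu, huv⟩ := hv
      · exact .inl (Finset.mem_union_left _ hvP)
      · exact .inr ⟨u, Finset.mem_union_left _ hu, not_not.mp huv⟩
  · calc (P ∪ I).card ≤ P.card + I.card := Finset.card_union_le P I
      _ ≤ 5 + I.card := by gcongr; exact Finset.card_image_le.trans (by simp)
      _ ≤ s + 4 := by omega

def IsConnectedDominating (G : SimpleGraph V) (D : Finset V) : Prop :=
  G.IsDominating D ∧ (G.induce (D : Set V)).Connected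

def IsMinimumConnectedDominating (G : SimpleGraph V) (D : Finset V) : Prop :=
  G.IsConnectedDominating D ∧ ∀ D', G.IsConnectedDominating D' → D.card ≤ D'.card

theorem Connected.exists_isMinimumConnectedDominating [Fintype V] (hG : G.Connected) :
    ∃ D, G.IsMinimumConnectedDominating D := by
  classical
  have huniv : G.IsConnectedDominating Finset.univ :=
    ⟨fun v ↦ .inl (Finset.mem_univ v), by
      rw [Finset.coe_univ]
      exact (induceUnivIso G).connected_iff.mpr hG⟩
  obtain ⟨D, hD, hmin⟩ := (Finset.univ.filter G.IsConnectedDominating).exists_min_image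
    Finset.card ⟨_, Finset.mem_filter.mpr ⟨Finset.mem_univ _, huniv⟩⟩
  exact ⟨D, (Finset.mem_filter.mp hD).2,
    fun D' hD' ↦ hmin D' (Finset.mem_filter.mpr ⟨Finset.mem_univ _, hD'⟩)⟩

theorem Connected.induce_diff_singleton_of_forall_dist_le {s : Set V}
    (hs : (G.induce s).Connected) {u x : s} (hux : u ≠ x)
    (hx : ∀ v, (G.induce s).dist u v ≤ (G.induce s).dist u x) :
    (G.induce (s \ {(x : V)})).Connected := by
  classical
  have hu : (u : V) ∈ s \ {(x : V)} := ⟨u.2, fun h ↦ hux (Subtype.ext h)⟩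
  refine induce_connected_of_patches _ hu fun {v} hv ↦ ?_
  obtain ⟨p, hp⟩ := hs.exists_walk_length_eq_dist u ⟨v, hv.1⟩
  have hxp : x ∉ p.support := fun hx' ↦ by
    have h1 := dist_le (p.takeUntil x hx')
    have h2 := Walk.length_takeUntil_lt_length hx' fun h ↦ hv.2 (congrArg Subtype.val h).symm
    have := hx ⟨v, hv.1⟩
    omega
  set q := p.map (Embedding.induce s).toHom
  refine ⟨{w | w ∈ q.support}, fun w hw ↦ ?_, q.start_mem_support, q.end_mem_support,
    q.connected_induce_support.preconnected _ _⟩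
  simp only [q, Walk.support_map, Set.mem_ofPred_eq, List.mem_map] at hw
  obtain ⟨w, hw, rfl⟩ := hw
  exact ⟨w.2, fun h ↦ hxp (Subtype.ext h ▸ hw)⟩

theorem IsMinimumConnectedDominating.exists_private_neighbor_of_forall_dist_le {D : Finset V}
    (hD : G.IsMinimumConnectedDominating D) {u x : (D : Set V)} (hux : u ≠ x)
    (hx : ∀ v, (G.induce D).dist u v ≤ (G.induce D).dist u x) :
    ∃ p, G.Adj x p ∧ ∀ d ∈ D, G.Adj d p → d = x := by
  classical
  obtain ⟨y, hxy⟩ := (hD.1.2.preconnected x u).nonempty_neighborSet_left hux.symm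
  have hconn : (G.induce ((D.erase x : Finset V) : Set V)).Connected := by
    rw [Finset.coe_erase]
    exact hD.1.2.induce_diff_singleton_of_forall_dist_le hux hx
  have hnotdom : ¬G.IsDominating (D.erase x) := fun hdom ↦
    (hD.2 _ ⟨hdom, hconn⟩).not_gt (Finset.card_erase_lt_of_mem x.2)
  simp only [IsDominating, Finset.mem_erase, not_forall, not_or, not_exists, not_and] at hnotdom
  obtain ⟨p, hpD, hp⟩ := hnotdom
  have hpriv : ∀ d ∈ D, G.Adj d p → d = x := fun d hd hdp ↦ by_contra fun h ↦ hp d ⟨h, hd⟩ hdp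
  have hpD : p ∉ D := fun hp' ↦ by
    obtain rfl : p = x := by_contra fun h ↦ hpD h hp'
    have hxy : G.Adj x y := hxy
    exact hp y ⟨hxy.ne', y.2⟩ hxy.symm
  obtain hp' | ⟨d, hd, hdp⟩ := hD.1.1 p
  · exact absurd hp' hpD
  · exact ⟨p, hpriv d hd hdp ▸ hdp, hpriv⟩

theorem Reachable.exists_adj_adj_adj_of_three_le_dist {H : SimpleGraph W} {u x : W}
    (hr : H.Reachable u x) (h3 : 3 ≤ H.dist u x) :
    ∃ a b c, H.Adj a b ∧ H.Adj b c ∧ H.Adj c x ∧ ¬H.Adj a c ∧ ¬H.Adj a x ∧ ¬H.Adj b x := by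
  obtain ⟨p, hp⟩ := hr.exists_walk_length_eq_dist
  obtain ⟨a, q, hq, hqd⟩ : ∃ a, ∃ q : H.Walk a x, q.length = 3 ∧ q.length = H.dist a x :=
    ⟨_, p.drop (p.length - 3), by rw [Walk.drop_length]; omega,
      length_eq_dist_of_subwalk hp (p.isSubwalk_drop _)⟩
  rcases q with _ | ⟨hab, _ | ⟨hbc, _ | ⟨hcx, _ | ⟨_, _⟩⟩⟩⟩ <;> simp only [Walk.length_cons,
    Walk.length_nil] at hq <;> try omega
  simp only [Walk.length_cons, Walk.length_nil] at hqd
  refine ⟨_, _, _, hab, hbc, hcx, fun h ↦ ?_, fun h ↦ ?_, fun h ↦ ?_⟩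
  · have := dist_le (.cons h (.cons hcx .nil))
    simp only [Walk.length_cons, Walk.length_nil] at this
    omega
  · have := dist_eq_one_iff_adj.mpr h
    omega
  · have := dist_le (.cons hab (.cons h .nil))
    simp only [Walk.length_cons, Walk.length_nil] at this
    omega

theorem Connected.eq_or_adj_or_exists_adj_adj_of_dist_le_two {H : SimpleGraph W} {u v : W}
    (hH : H.Connected) (h : H.dist u v ≤ 2) : u = v ∨ H.Adj u v ∨ ∃ w, H.Adj u w ∧ H.Adj w v := by
  obtain h0 | h1 | h2 : H.dist u v = 0 ∨ H.dist u v = 1 ∨ H.dist u v = 2 := by omega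
  · exact .inl (hH.dist_eq_zero_iff.mp h0)
  · exact .inr (.inl (dist_eq_one_iff_adj.mp h1))
  · obtain ⟨p, hp⟩ := exists_walk_of_dist_ne_zero (G := H) (by omega : H.dist u v ≠ 0)
    rcases p with _ | ⟨huw, _ | ⟨hwv, _ | ⟨_, _⟩⟩⟩ <;> simp only [Walk.length_cons,
      Walk.length_nil] at hp <;> try omega
    exact .inr (.inr ⟨_, huw, hwv⟩)

theorem IsMinimumConnectedDominating.dist_le_two {D : Finset V} (hP5 : ¬pathGraph 5 ⊴ G)
    (hD : G.IsMinimumConnectedDominating D) (u v : (D : Set V)) :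
    (G.induce D).dist u v ≤ 2 := by
  have : Nonempty (D : Set V) := ⟨u⟩
  obtain ⟨x, hx⟩ := Finite.exists_max ((G.induce (D : Set V)).dist u)
  refine (hx v).trans (not_lt.mp fun h3 ↦ hP5 ?_)
  have hux : u ≠ x := by rintro rfl; simp at h3
  obtain ⟨a, b, c, hab, hbc, hcx, hac, hax, hbx⟩ :=
    (hD.1.2.preconnected u x).exists_adj_adj_adj_of_three_le_dist (by omega)
  obtain ⟨p, hxp, hp⟩ := hD.exists_private_neighbor_of_forall_dist_le hux hx
  simp only [induce_adj] at hab hbc hcx hac hax hbx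
  refine pathGraph_five_isIndContained hab hbc hcx hxp hac hax (fun h ↦ ?_) hbx (fun h ↦ ?_)
    (fun h ↦ ?_)
  · exact hbx (hp a a.2 h ▸ hab.symm)
  · exact hax (hp b b.2 h ▸ hab)
  · exact hcx.ne (hp c c.2 h)

theorem Connected.exists_farthest_pair [Finite W] {H : SimpleGraph W} (hH : H.Connected)
    (hdiam : ∀ u v, H.dist u v ≤ 2) {u v : W} (huv : u ≠ v) (hnadj : ¬H.Adj u v) :
    ∃ a b, (∃ c ≠ a, ∀ w, H.dist c w ≤ H.dist c a) ∧ (∀ w, H.dist a w ≤ H.dist a b) ∧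
      H.dist a b = 2 := by
  have : Nonempty W := ⟨u⟩
  obtain ⟨a, ha⟩ := Finite.exists_max (H.dist u)
  obtain ⟨b, hb⟩ := Finite.exists_max (H.dist a)
  have huv2 : H.dist u v = 2 :=
    le_antisymm (hdiam u v) (hH.one_lt_dist_of_ne_of_not_adj huv hnadj)
  have hua : H.dist u a = 2 := le_antisymm (hdiam u a) (huv2 ▸ ha v)
  refine ⟨a, b, ⟨u, fun h ↦ by simp [h] at hua, ha⟩, hb, le_antisymm (hdiam a b) ?_⟩
  calc 2 = H.dist a u := by rw [dist_comm, hua]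
    _ ≤ H.dist a b := hb u

theorem IsDominating.isDominating_of_private_neighbors [DecidableEq V] {D : Finset V}
    (hP5 : ¬pathGraph 5 ⊴ G) (hD : G.IsDominating D) {ya ym yb pa pb : V}
    (hya : ya ∈ D) (hym : ym ∈ D) (hyb : yb ∈ D) (ham : G.Adj ya ym) (hmb : G.Adj ym yb)
    (hab : ¬G.Adj ya yb) (hne : ya ≠ yb)
    (hdiam : ∀ d ∈ D, d = ym ∨ G.Adj d ym ∨ ∃ w ∈ D, G.Adj d w ∧ G.Adj w ym)
    (hapa : G.Adj ya pa) (hpa : ∀ d ∈ D, G.Adj d pa → d = ya)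
    (hbpb : G.Adj yb pb) (hpb : ∀ d ∈ D, G.Adj d pb → d = yb) :
    G.IsDominating {pa, ya, ym, yb, pb} := by
  have hpapb : G.Adj pa pb := by
    by_contra h
    exact hP5 <| pathGraph_five_isIndContained hapa.symm ham hmb hbpb
      (fun h ↦ ham.ne (hpa ym hym h.symm).symm) (fun h ↦ hne (hpa yb hyb h.symm).symm) h hab
      (fun h ↦ hne (hpb ya hya h)) (fun h ↦ hmb.ne (hpb ym hym h))
  have hfar : ∀ z, (∀ c ∈ ({pa, ya, ym, yb, pb} : Finset V), ¬G.Adj c z) →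
      ∀ w ∈ D, G.Adj w z → ¬G.Adj w ya ∧ ¬G.Adj w ym ∧ ¬G.Adj w yb := by
    intro z hz w hw hwz
    simp only [Finset.mem_insert, Finset.mem_singleton, forall_eq_or_imp, forall_eq] at hz
    obtain ⟨hpaz, hyaz, hymz, hybz, hpbz⟩ := hz
    have hwpa : ¬G.Adj w pa := fun h ↦ hyaz (hpa w hw h ▸ hwz)
    have hwpb : ¬G.Adj w pb := fun h ↦ hybz (hpb w hw h ▸ hwz)
    have hwya : ¬G.Adj w ya := fun h ↦ hP5 <| pathGraph_five_isIndContained hwz.symm h hapa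
      hpapb (mt G.adj_symm hyaz) (mt G.adj_symm hpaz) (mt G.adj_symm hpbz) hwpa hwpb
      fun h ↦ hne (hpb ya hya h)
    refine ⟨hwya, fun h ↦ ?_, fun h ↦ ?_⟩
    · exact hP5 <| pathGraph_five_isIndContained hwz.symm h ham.symm hapa
        (mt G.adj_symm hymz) (mt G.adj_symm hyaz) (mt G.adj_symm hpaz) hwya hwpa
        fun h ↦ ham.ne (hpa ym hym h).symm
    · exact hP5 <| pathGraph_five_isIndContained hwz.symm h hbpb hpapb.symm
        (mt G.adj_symm hybz) (mt G.adj_symm hpbz) (mt G.adj_symm hpaz) hwpb hwpa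
        fun h ↦ hne (hpa yb hyb h).symm
  intro z
  by_contra! hz
  obtain ⟨d, hd, hdS, hdfar⟩ : ∃ d ∈ D, d ∉ ({pa, ya, ym, yb, pb} : Finset V) ∧
      ∀ c ∈ ({pa, ya, ym, yb, pb} : Finset V), ¬G.Adj c d := by
    obtain hzD | ⟨d, hd, hdz⟩ := hD z
    · exact ⟨z, hzD, hz⟩
    refine ⟨d, hd, fun hdS ↦ hz.2 d hdS hdz, ?_⟩
    obtain ⟨hdya, hdym, hdyb⟩ := hfar z hz.2 d hd hdz
    have hzya : ¬G.Adj ya z := hz.2 ya (by simp)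
    have hzyb : ¬G.Adj yb z := hz.2 yb (by simp)
    simp only [Finset.mem_insert, Finset.mem_singleton, forall_eq_or_imp, forall_eq]
    exact ⟨fun h ↦ hzya (hpa d hd h.symm ▸ hdz), mt G.adj_symm hdya, mt G.adj_symm hdym,
      mt G.adj_symm hdyb, fun h ↦ hzyb (hpb d hd h.symm ▸ hdz)⟩
  obtain rfl | hdym | ⟨w, hw, hdw, hwym⟩ := hdiam d hd
  · exact hdS (by simp)
  · exact hdfar ym (by simp) hdym.symm
  · exact (hfar d hdfar w hw hdw.symm).2.1 hwym

theorem Connected.exists_isDominating_card_le_five_or_isClique [Fintype V] (hG : G.Connected)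
    (hP5 : ¬pathGraph 5 ⊴ G) :
    ∃ D : Finset V, G.IsDominating D ∧ (D.card ≤ 5 ∨ G.IsClique (D : Set V)) := by
  classical
  obtain ⟨D, hD⟩ := hG.exists_isMinimumConnectedDominating
  by_cases hcl : G.IsClique (D : Set V)
  · exact ⟨D, hD.1.1, .inr hcl⟩
  obtain ⟨u, hu, v, hv, huv, hnadj⟩ : ∃ u ∈ D, ∃ v ∈ D, u ≠ v ∧ ¬G.Adj u v := by
    simpa [IsClique, Set.Pairwise] using hcl
  have hdiam := hD.dist_le_two hP5
  have hnear (u v : (D : Set V)) :=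
    hD.1.2.eq_or_adj_or_exists_adj_adj_of_dist_le_two (hdiam u v)
  obtain ⟨a, b, ⟨c, hca, hc⟩, hb, hab⟩ := hD.1.2.exists_farthest_pair hdiam
    (u := ⟨u, hu⟩) (v := ⟨v, hv⟩) (by simpa using huv) hnadj
  have hne : a ≠ b := by rintro rfl; simp at hab
  have hnab : ¬(G.induce (D : Set V)).Adj a b := fun h ↦ by
    simp [dist_eq_one_iff_adj.mpr h] at hab
  obtain ⟨m, ham, hmb⟩ := ((hnear a b).resolve_left hne).resolve_left hnab
  obtain ⟨pa, hapa, hpa⟩ := hD.exists_private_neighbor_of_forall_dist_le hca hc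
  obtain ⟨pb, hbpb, hpb⟩ := hD.exists_private_neighbor_of_forall_dist_le hne hb
  simp only [induce_adj] at ham hmb hnab
  have hm (d) (hd : d ∈ D) : d = m ∨ G.Adj d m ∨ ∃ w ∈ D, G.Adj d w ∧ G.Adj w m := by
    obtain h | h | ⟨w, hdw, hwm⟩ := hnear ⟨d, hd⟩ m
    exacts [.inl (congrArg Subtype.val h), .inr (.inl h), .inr (.inr ⟨w, w.2, hdw, hwm⟩)]
  exact ⟨_, hD.1.1.isDominating_of_private_neighbors hP5 a.2 m.2 b.2 ham hmb hnab
    (Subtype.coe_injective.ne hne) hm hapa hpa hbpb hpb, .inl Finset.card_le_five⟩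

end SimpleGraph

open SimpleGraph

theorem stmt_14_general {V : Type} [Fintype V] (G : SimpleGraph V)
    (s : ℕ) (hs : 1 ≤ s) (hconn : G.Connected)
    (hfree : ¬ Nonempty (sP1P5 s ↪g G)) :
    ∃ D : Finset V, (∀ v : V, v ∈ D ∨ ∃ u ∈ D, G.Adj u v) ∧
      D.card ≤ max 3 (max G.cliqueNum (s + 4)) := by
  by_cases hP5 : pathGraph 5 ⊴ G
  · obtain ⟨f⟩ := hP5
    obtain ⟨D, hD, hcard⟩ := exists_isDominating_card_le_of_not_sP1P5_isIndContained hfree f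
    exact ⟨D, hD, by omega⟩
  · obtain ⟨D, hD, h5 | hclique⟩ := hconn.exists_isDominating_card_le_five_or_isClique hP5
    · exact ⟨D, hD, by omega⟩
    · exact ⟨D, hD, hclique.card_le_cliqueNum.trans (by omega)⟩

theorem stmt_14 {V : Type} [Fintype V] [DecidableEq V] (G : SimpleGraph V)
    (s : ℕ) (hs : 1 ≤ s) (hconn : G.Connected)
    (hfree : ¬ Nonempty (sP1P5 s ↪g G)) :
    ∃ D : Finset V, (∀ v : V, v ∈ D ∨ ∃ u ∈ D, G.Adj u v) ∧
      D.card ≤ max 3 (max G.cliqueNum (s + 4)) :=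
  stmt_14_general G s hs hconn hfree
end
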